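/- Let ψ : [0,T] × ℝⁿ → ℝ be Lipschitz (for the Euclidean distance) and let X : [0,T] × ℝⁿ → ℝⁿ be such that for a.e. y the curve t ↦ X(t,y) is Lipschitz and satisfies ∂_t X(t,y) = b(t, X(t,y)) for a.e. t, where b is Borel. Then for a.e. y, the map t ↦ ψ(t, X(t,y)) is Lipschitz on [0,T] and for a.e. t its derivative equals (∂_t ψ)(t, X(t,y)) + b(t, X(t,y)) · (∇ψ)(t, X(t,y)), at every (t,y) for which ψ is differentiable at (t, X(t,y)). -/

import Mathlib

open Set MeasureTheory

theorem LipschitzWith.lipschitzOnWith_comp_graph {E F G : Type*} [PseudoEMetricSpace E]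
    [PseudoEMetricSpace F] [PseudoEMetricSpace G] {ψ : E × F → G} {K : NNReal}
    (hψ : LipschitzWith K ψ) {γ : E → F} {L : NNReal} {s : Set E}
    (hγ : LipschitzOnWith L γ s) :
    LipschitzOnWith (K * max 1 L) (fun t => ψ (t, γ t)) s :=
  hψ.comp_lipschitzOnWith ((LipschitzWith.id.lipschitzOnWith (s := s)).prodMk hγ)

theorem HasFDerivAt.hasDerivAt_comp_graph {𝕜 F G : Type*} [NontriviallyNormedField 𝕜]
    [NormedAddCommGroup F] [NormedSpace 𝕜 F] [NormedAddCommGroup G] [NormedSpace 𝕜 G]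
    {ψ : 𝕜 × F → G} {γ : 𝕜 → F} {ψ' : 𝕜 × F →L[𝕜] G} {v : F} {t : 𝕜}
    (hψ : HasFDerivAt ψ ψ' (t, γ t)) (hγ : HasDerivAt γ v t) :
    HasDerivAt (fun s => ψ (s, γ s)) (ψ' (1, v)) t :=
  hψ.comp_hasDerivAt t ((hasDerivAt_id t).prodMk hγ)

theorem stmt8_general {n : ℕ} (T : ℝ)
    (ψ : ℝ × EuclideanSpace ℝ (Fin n) → ℝ) (Lψ : NNReal) (hψ : LipschitzWith Lψ ψ)
    (b : ℝ × EuclideanSpace ℝ (Fin n) → EuclideanSpace ℝ (Fin n))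
    (X : ℝ → EuclideanSpace ℝ (Fin n) → EuclideanSpace ℝ (Fin n))
    (hX : ∀ᵐ y : EuclideanSpace ℝ (Fin n),
      (∃ LX : NNReal, LipschitzOnWith LX (fun t => X t y) (Icc (0:ℝ) T)) ∧
      ∀ᵐ t ∂(volume.restrict (Icc (0:ℝ) T)),
        HasDerivAt (fun s => X s y) (b (t, X t y)) t) :
    ∀ᵐ y : EuclideanSpace ℝ (Fin n),
      (∃ LC : NNReal, LipschitzOnWith LC (fun t => ψ (t, X t y)) (Icc (0:ℝ) T)) ∧
      ∀ᵐ t ∂(volume.restrict (Icc (0:ℝ) T)),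
        DifferentiableAt ℝ ψ (t, X t y) →
        HasDerivAt (fun s => ψ (s, X s y))
          (fderiv ℝ ψ (t, X t y) (1, b (t, X t y))) t := by
  filter_upwards [hX] with y ⟨⟨LX, hLX⟩, hode⟩
  refine ⟨⟨_, hψ.lipschitzOnWith_comp_graph hLX⟩, ?_⟩
  filter_upwards [hode] with t hXt hψt
  exact hψt.hasFDerivAt.hasDerivAt_comp_graph hXt

/-- chain rule along flow trajectories. If `ψ` is Lipschitz and for a.e. `y`
the curve `t ↦ X(t,y)` is Lipschitz and solves the ODE driven by the Borel field `b`,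
then for a.e. `y` the map `t ↦ ψ(t, X(t,y))` is Lipschitz on `[0,T]` and for a.e. `t`,
at every point where `ψ` is differentiable at `(t, X(t,y))`, its derivative equals
`∂_t ψ(t,X(t,y)) + b(t,X(t,y)) · ∇ψ(t,X(t,y))`, i.e. `Dψ(t,X(t,y)) (1, b(t,X(t,y)))`. -/
theorem stmt8 {n : ℕ} (T : ℝ) (hT : 0 < T)
    (ψ : ℝ × EuclideanSpace ℝ (Fin n) → ℝ) (Lψ : NNReal) (hψ : LipschitzWith Lψ ψ)
    (b : ℝ × EuclideanSpace ℝ (Fin n) → EuclideanSpace ℝ (Fin n)) (hb : Measurable b)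
    (X : ℝ → EuclideanSpace ℝ (Fin n) → EuclideanSpace ℝ (Fin n))
    (hX : ∀ᵐ y : EuclideanSpace ℝ (Fin n),
      (∃ LX : NNReal, LipschitzOnWith LX (fun t => X t y) (Icc (0:ℝ) T)) ∧
      ∀ᵐ t ∂(volume.restrict (Icc (0:ℝ) T)),
        HasDerivAt (fun s => X s y) (b (t, X t y)) t) :
    ∀ᵐ y : EuclideanSpace ℝ (Fin n),
      (∃ LC : NNReal, LipschitzOnWith LC (fun t => ψ (t, X t y)) (Icc (0:ℝ) T)) ∧
      ∀ᵐ t ∂(volume.restrict (Icc (0:ℝ) T)),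
        DifferentiableAt ℝ ψ (t, X t y) →
        HasDerivAt (fun s => ψ (s, X s y))
          (fderiv ℝ ψ (t, X t y) (1, b (t, X t y))) t :=
  stmt8_general T ψ Lψ hψ b X hX
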